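/- An integral domain D is t-sharp if and only if D is w-sharp. -/

import Mathlib

/-!
Let `*` be `t` or `w`, let `0 ≠ A` be an ideal and `0 ≠ a ∈ A`. Applying `*`-sharpness to
`aD ⊇ A · (aD : A)` gives `H, J` with `(HJ)* = aD`, `A ⊆ H*` and `a A⁻¹ ⊆ (aD : A) ⊆ J*`.
Since `aD` is divisorial, `HJ ⊆ aD`, and playing the two inclusions against it yields `H ⊆ A_v`
and `D = a⁻¹ (HJ)* ⊆ (H A⁻¹)*`. As `*` has finite type, some finitely generated `E ⊆ A⁻¹`
satisfies `1 ∈ (AE)_v`. For finitely generated `A` the ideal `AE` is then finitely generated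
with `(AE)⁻¹ = D`, and it witnesses `A_v ⊆ A_w`. So in a `t`- or `w`-sharp domain `t` and `w`
agree on integral ideals, which are the only ideals the definition of sharpness looks at.
-/

open scoped nonZeroDivisors

section StarSharpDefs

variable {D K : Type*} [CommRing D] [IsDomain D] [Field K] [Algebra D K] [IsFractionRing D K]

/-- `D` is sharp with respect to the operation `star` ("`*`-sharp"): whenever
`I ⊇ A·B` for nonzero ideals `I, A, B` of `D`, there exist nonzero ideals `H, J`
with `I* = (HJ)*`, `H* ⊇ A` and `J* ⊇ B`. -/
def IsSharpOp (star : FractionalIdeal D⁰ K → FractionalIdeal D⁰ K) : Prop :=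
  ∀ I A B : Ideal D, I ≠ 0 → A ≠ 0 → B ≠ 0 → A * B ≤ I →
    ∃ H J : Ideal D, H ≠ 0 ∧ J ≠ 0 ∧
      star (I : FractionalIdeal D⁰ K) =
        star ((H : FractionalIdeal D⁰ K) * (J : FractionalIdeal D⁰ K)) ∧
      (A : FractionalIdeal D⁰ K) ≤ star (H : FractionalIdeal D⁰ K) ∧
      (B : FractionalIdeal D⁰ K) ≤ star (J : FractionalIdeal D⁰ K)

lemma inv_ne_zero' {I : FractionalIdeal D⁰ K} (hI : I ≠ 0) : I⁻¹ ≠ 0 := by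
  obtain ⟨d, hd, hdI⟩ := I.isFractional
  have hmem : algebraMap D K d ∈ I⁻¹ := by
    rw [FractionalIdeal.mem_inv_iff hI]
    intro y hy
    obtain ⟨c, hc⟩ := hdI y hy
    refine ⟨c, trivial, ?_⟩
    simpa [Algebra.smul_def] using hc
  intro h0
  rw [h0] at hmem
  have : algebraMap D K d ≠ 0 :=
    IsFractionRing.to_map_ne_zero_of_mem_nonZeroDivisors hd
  exact this (by simpa using hmem)

/-- The `v`-operation `I ↦ I_v = (I⁻¹)⁻¹`. -/
noncomputable def vOp (I : FractionalIdeal D⁰ K) : FractionalIdeal D⁰ K := (I⁻¹)⁻¹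

lemma vOp_mono {I J : FractionalIdeal D⁰ K} (h : I ≤ J) : vOp I ≤ vOp J := by
  rcases eq_or_ne I 0 with rfl | hI
  · show ((0 : FractionalIdeal D⁰ K)⁻¹)⁻¹ ≤ vOp J
    rw [FractionalIdeal.inv_zero', FractionalIdeal.inv_zero']
    exact FractionalIdeal.zero_le _
  have hJ : J ≠ 0 := fun hJ0 => hI (le_antisymm (hJ0 ▸ h) (FractionalIdeal.zero_le I))
  exact FractionalIdeal.inv_anti_mono (inv_ne_zero' hJ) (inv_ne_zero' hI)
    (FractionalIdeal.inv_anti_mono hI hJ h)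

/-- The `t`-operation: `I_t` is the union of `H_v` over the finitely generated
subideals `H` of `I`. -/
noncomputable def tOp (I : FractionalIdeal D⁰ K) : FractionalIdeal D⁰ K :=
  ⟨⨆ J : {J : FractionalIdeal D⁰ K // (J : Submodule D K).FG ∧ J ≤ I},
      ((vOp (J : FractionalIdeal D⁰ K) : FractionalIdeal D⁰ K) : Submodule D K),
    FractionalIdeal.isFractional_of_le (J := vOp I)
      (iSup_le fun J => FractionalIdeal.coe_le_coe.2 (vOp_mono J.2.2))⟩

lemma ne_zero_of_inv_eq_one {H : FractionalIdeal D⁰ K} (hH : H⁻¹ = 1) : H ≠ 0 := by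
  intro h0
  rw [h0, FractionalIdeal.inv_zero'] at hH
  exact zero_ne_one hH

lemma div_le_vOp {I : FractionalIdeal D⁰ K} {H : FractionalIdeal D⁰ K} (hH : H⁻¹ = 1) :
    I / H ≤ vOp I := by
  have hHne : H ≠ 0 := ne_zero_of_inv_eq_one hH
  intro x hx'
  have hx : ∀ y ∈ H, x * y ∈ I :=
    (FractionalIdeal.mem_div_iff_of_ne_zero hHne).1 hx'
  show x ∈ vOp I
  rcases eq_or_ne I 0 with rfl | hI
  · obtain ⟨y, hy, hy0⟩ : ∃ y ∈ H, y ≠ 0 := by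
      by_contra hcon
      push_neg at hcon
      exact hHne (FractionalIdeal.eq_zero_iff.2 hcon)
    have : x * y = 0 := by
      have := hx y hy
      simpa using FractionalIdeal.eq_zero_iff.1 rfl _ this
    have hx0 : x = 0 := by
      rcases mul_eq_zero.1 this with h | h
      · exact h
      · exact absurd h hy0
    rw [hx0]
    exact FractionalIdeal.mem_coe.1
      (Submodule.zero_mem ((vOp (0 : FractionalIdeal D⁰ K) : FractionalIdeal D⁰ K) : Submodule D K))
  show x ∈ (I⁻¹)⁻¹
  rw [FractionalIdeal.mem_inv_iff (inv_ne_zero' hI)]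
  intro z hz
  rw [FractionalIdeal.mem_inv_iff hI] at hz
  have : x * z ∈ H⁻¹ := by
    rw [FractionalIdeal.mem_inv_iff hHne]
    intro y hy
    have h1 : z * (x * y) ∈ (1 : FractionalIdeal D⁰ K) := hz _ (hx y hy)
    have : x * z * y = z * (x * y) := by ring
    rw [this]
    exact h1
  rw [hH] at this
  exact this

/-- The `w`-operation: `I_w = {x ∈ K ∣ xH ⊆ I` for some finitely generated ideal
`H` of `D` with `H⁻¹ = D}`. -/
noncomputable def wOp (I : FractionalIdeal D⁰ K) : FractionalIdeal D⁰ K :=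
  ⟨⨆ H : {H : Ideal D // H.FG ∧ ((H : FractionalIdeal D⁰ K))⁻¹ = 1},
      ((I / ((H : Ideal D) : FractionalIdeal D⁰ K) : FractionalIdeal D⁰ K) : Submodule D K),
    FractionalIdeal.isFractional_of_le (J := vOp I)
      (iSup_le fun H => FractionalIdeal.coe_le_coe.2 (div_le_vOp H.2.2))⟩

end StarSharpDefs

open FractionalIdeal

lemma Submodule.FG.exists_fg_le_mul_of_le_mul {R A : Type*} [CommSemiring R] [Semiring A]
    [Algebra R A] {X Y G : Submodule R A} (hG : G.FG) (h : G ≤ X * Y) :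
    ∃ X₀ Y₀ : Submodule R A, X₀.FG ∧ Y₀.FG ∧ X₀ ≤ X ∧ Y₀ ≤ Y ∧ G ≤ X₀ * Y₀ := by
  induction G, hG using Submodule.fg_induction with
  | singleton g =>
    classical
    obtain ⟨T, T', hT, hT', hg⟩ :=
      Submodule.mem_span_mul_finite_of_mem_mul (h (Submodule.mem_span_singleton_self g))
    refine ⟨Submodule.span R T, Submodule.span R T', Submodule.fg_span T.finite_toSet,
      Submodule.fg_span T'.finite_toSet, Submodule.span_le.2 hT, Submodule.span_le.2 hT', ?_⟩
    rwa [Submodule.span_mul_span, Submodule.span_singleton_le_iff_mem]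
  | sup G₁ G₂ _ _ ih₁ ih₂ =>
    obtain ⟨X₁, Y₁, hX₁, hY₁, hX₁X, hY₁Y, hG₁⟩ := ih₁ (le_sup_left.trans h)
    obtain ⟨X₂, Y₂, hX₂, hY₂, hX₂X, hY₂Y, hG₂⟩ := ih₂ (le_sup_right.trans h)
    refine ⟨X₁ ⊔ X₂, Y₁ ⊔ Y₂, hX₁.sup hX₂, hY₁.sup hY₂, sup_le hX₁X hX₂X, sup_le hY₁Y hY₂Y,
      sup_le ?_ ?_⟩
    · exact hG₁.trans (mul_le_mul' le_sup_left le_sup_left)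
    · exact hG₂.trans (mul_le_mul' le_sup_right le_sup_right)

section

variable {D K : Type*} [CommRing D] [Field K] [Algebra D K]

lemma exists_fg_le_mul_of_fg_le_mul {X Y G : FractionalIdeal D⁰ K}
    (hG : (G : Submodule D K).FG) (h : G ≤ X * Y) :
    ∃ X₀ Y₀ : FractionalIdeal D⁰ K, (Y₀ : Submodule D K).FG ∧ X₀ ≤ X ∧ Y₀ ≤ Y ∧
      G ≤ X₀ * Y₀ := by
  rw [← coe_le_coe, coe_mul] at h
  obtain ⟨X₀, Y₀, -, hY₀, hX₀X, hY₀Y, hG₀⟩ := hG.exists_fg_le_mul_of_le_mul h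
  let X₀' : FractionalIdeal D⁰ K := ⟨X₀, isFractional_of_le hX₀X⟩
  let Y₀' : FractionalIdeal D⁰ K := ⟨Y₀, isFractional_of_le hY₀Y⟩
  exact ⟨X₀', Y₀', hY₀, hX₀X, hY₀Y, by rwa [← coe_le_coe, coe_mul]⟩

lemma fg_spanSingleton_mul [IsFractionRing D K] {X : FractionalIdeal D⁰ K} (x : K)
    (hX : (X : Submodule D K).FG) :
    ((spanSingleton D⁰ x * X : FractionalIdeal D⁰ K) : Submodule D K).FG := by
  rw [coe_mul, coe_spanSingleton]
  exact (Submodule.fg_span_singleton x).mul hX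

lemma spanSingleton_inv_mul_cancel_left [IsFractionRing D K] {x : K} (hx : x ≠ 0)
    (X : FractionalIdeal D⁰ K) :
    spanSingleton D⁰ x⁻¹ * (spanSingleton D⁰ x * X) = X := by
  rw [← mul_assoc, spanSingleton_mul_spanSingleton, inv_mul_cancel₀ hx, spanSingleton_one,
    one_mul]

lemma spanSingleton_mul_le_iff_le_inv_mul [IsFractionRing D K] {x : K} (hx : x ≠ 0)
    {X Y : FractionalIdeal D⁰ K} :
    spanSingleton D⁰ x * X ≤ Y ↔ X ≤ spanSingleton D⁰ x⁻¹ * Y := by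
  constructor
  · intro h
    simpa only [spanSingleton_inv_mul_cancel_left hx] using
      mul_le_mul_right h (spanSingleton D⁰ x⁻¹)
  · intro h
    calc spanSingleton D⁰ x * X ≤ spanSingleton D⁰ x * (spanSingleton D⁰ x⁻¹ * Y) :=
          mul_le_mul_right h _
      _ = Y := by simpa only [inv_inv] using spanSingleton_inv_mul_cancel_left (inv_ne_zero hx) Y

lemma IsSharpOp.of_eq_on_coeIdeal {s s' : FractionalIdeal D⁰ K → FractionalIdeal D⁰ K}
    (hss' : ∀ N : Ideal D, s N = s' N) (h : IsSharpOp s) : IsSharpOp s' := by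
  intro I A B hI hA hB hAB
  obtain ⟨H, J, hH, hJ, heq, hAH, hBJ⟩ := h I A B hI hA hB hAB
  refine ⟨H, J, hH, hJ, ?_, hss' H ▸ hAH, hss' J ▸ hBJ⟩
  rw [← coeIdeal_mul, ← hss', ← hss', coeIdeal_mul, heq]

end

section

variable {D K : Type*} [CommRing D] [IsDomain D] [Field K] [Algebra D K] [IsFractionRing D K]

instance : NoZeroDivisors (FractionalIdeal D⁰ K) where
  eq_zero_or_eq_zero_of_mul_eq_zero {X Y} h := by
    simp only [eq_zero_iff] at h ⊢
    by_contra! hne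
    obtain ⟨⟨x, hx, hx0⟩, ⟨y, hy, hy0⟩⟩ := hne
    exact mul_ne_zero hx0 hy0 (h _ (mul_mem_mul hx hy))

lemma le_inv_iff_mul_le {X Y : FractionalIdeal D⁰ K} (hY : Y ≠ 0) : X ≤ Y⁻¹ ↔ X * Y ≤ 1 :=
  le_div_iff_mul_le hY

lemma self_mul_inv_le_one (X : FractionalIdeal D⁰ K) : X * X⁻¹ ≤ 1 :=
  mul_one_div_le_one

lemma inv_spanSingleton_mul (x : K) (Y : FractionalIdeal D⁰ K) :
    (spanSingleton D⁰ x * Y)⁻¹ = spanSingleton D⁰ x⁻¹ * Y⁻¹ := by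
  rcases eq_or_ne x 0 with rfl | hx
  · simp only [inv_zero, spanSingleton_zero, zero_mul, inv_zero']
  rcases eq_or_ne Y 0 with rfl | hY
  · simp only [mul_zero, inv_zero']
  have hxY : spanSingleton D⁰ x * Y ≠ 0 :=
    mul_ne_zero (spanSingleton_ne_zero_iff.2 hx) hY
  refine eq_of_forall_le_iff fun Z => ?_
  rw [le_inv_iff_mul_le hxY, ← spanSingleton_mul_le_iff_le_inv_mul hx, le_inv_iff_mul_le hY,
    mul_assoc, mul_left_comm]

lemma vOp_zero : vOp (0 : FractionalIdeal D⁰ K) = 0 := by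
  simp only [vOp, inv_zero']

lemma le_vOp (X : FractionalIdeal D⁰ K) : X ≤ vOp X := by
  rcases eq_or_ne X 0 with rfl | hX
  · exact le_of_eq vOp_zero.symm
  · rw [vOp, le_inv_iff_mul_le (inv_ne_zero' hX)]
    exact self_mul_inv_le_one X

lemma inv_vOp (X : FractionalIdeal D⁰ K) : (vOp X)⁻¹ = X⁻¹ := by
  rcases eq_or_ne X 0 with rfl | hX
  · rw [vOp_zero]
  · exact le_antisymm (inv_anti_mono hX (inv_ne_zero' (inv_ne_zero' hX)) (le_vOp X))
      (le_vOp X⁻¹)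

lemma vOp_spanSingleton (x : K) : vOp (spanSingleton D⁰ x) = spanSingleton D⁰ x := by
  simp only [vOp, spanSingleton_inv, inv_inv]

lemma vOp_spanSingleton_mul (x : K) (Y : FractionalIdeal D⁰ K) :
    vOp (spanSingleton D⁰ x * Y) = spanSingleton D⁰ x * vOp Y := by
  simp only [vOp, inv_spanSingleton_mul, inv_inv]

lemma vOp_vOp_mul (X Y : FractionalIdeal D⁰ K) : vOp (vOp X * Y) = vOp (X * Y) := by
  rcases eq_or_ne X 0 with rfl | hX
  · rw [vOp_zero, zero_mul]
  rcases eq_or_ne Y 0 with rfl | hY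
  · rw [mul_zero, mul_zero]
  suffices h : (vOp X * Y)⁻¹ = (X * Y)⁻¹ from congrArg (·⁻¹) h
  have hvX : vOp X ≠ 0 := inv_ne_zero' (inv_ne_zero' hX)
  refine eq_of_forall_le_iff fun Z => ?_
  rw [le_inv_iff_mul_le (mul_ne_zero hvX hY), le_inv_iff_mul_le (mul_ne_zero hX hY),
    ← mul_assoc, mul_right_comm, ← le_inv_iff_mul_le hvX, inv_vOp, le_inv_iff_mul_le hX,
    mul_right_comm, mul_assoc]

lemma mul_vOp_le_vOp_mul (X Y : FractionalIdeal D⁰ K) : X * vOp Y ≤ vOp (X * Y) := by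
  simpa only [mul_comm X, vOp_vOp_mul] using le_vOp (vOp Y * X)

lemma mem_tOp_iff {I : FractionalIdeal D⁰ K} {x : K} :
    x ∈ tOp I ↔ ∃ F : FractionalIdeal D⁰ K, (F : Submodule D K).FG ∧ F ≤ I ∧ x ∈ vOp F := by
  have : Nonempty {F : FractionalIdeal D⁰ K // (F : Submodule D K).FG ∧ F ≤ I} :=
    ⟨⟨0, by rw [coe_zero]; exact Submodule.fg_bot, zero_le I⟩⟩
  have hdir : Directed (· ≤ ·)
      fun F : {F : FractionalIdeal D⁰ K // (F : Submodule D K).FG ∧ F ≤ I} =>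
        (vOp F.1 : Submodule D K) := by
    rintro ⟨F₁, hF₁, hF₁I⟩ ⟨F₂, hF₂, hF₂I⟩
    refine ⟨⟨F₁ ⊔ F₂, by rw [coe_sup]; exact hF₁.sup hF₂, sup_le hF₁I hF₂I⟩, ?_, ?_⟩
    · exact coe_le_coe.2 (vOp_mono le_sup_left)
    · exact coe_le_coe.2 (vOp_mono le_sup_right)
  change x ∈ ⨆ F : {F : FractionalIdeal D⁰ K // (F : Submodule D K).FG ∧ F ≤ I},
    (vOp F.1 : Submodule D K) ↔ _
  rw [Submodule.mem_iSup_of_directed _ hdir]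
  simp only [Subtype.exists, exists_prop, and_assoc, mem_coe]

lemma inv_mul_eq_inv_of_inv_eq_one {X Y : FractionalIdeal D⁰ K} (hY : Y⁻¹ = 1) :
    (X * Y)⁻¹ = X⁻¹ := by
  have hY0 : Y ≠ 0 := ne_zero_of_inv_eq_one hY
  rcases eq_or_ne X 0 with rfl | hX
  · rw [zero_mul]
  refine eq_of_forall_le_iff fun Z => ?_
  rw [le_inv_iff_mul_le (mul_ne_zero hX hY0), ← mul_assoc, ← le_inv_iff_mul_le hY0, hY,
    ← le_inv_iff_mul_le hX]

lemma mem_div_iff_spanSingleton_mul_le {I J : FractionalIdeal D⁰ K} (hJ : J ≠ 0) {x : K} :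
    x ∈ I / J ↔ spanSingleton D⁰ x * J ≤ I := by
  rw [← spanSingleton_le_iff_mem, le_div_iff_mul_le hJ]

lemma div_le_div_of_le {I X X' : FractionalIdeal D⁰ K} (hX' : X' ≠ 0) (h : X' ≤ X) :
    I / X ≤ I / X' := by
  have hX : X ≠ 0 := ne_bot_of_le_ne_bot hX' h
  rw [le_div_iff_mul_le hX']
  exact (mul_le_mul_right h _).trans ((le_div_iff_mul_le hX).1 le_rfl)

lemma mem_wOp_iff {I : FractionalIdeal D⁰ K} {x : K} :
    x ∈ wOp I ↔ ∃ G : Ideal D, G.FG ∧ (G : FractionalIdeal D⁰ K)⁻¹ = 1 ∧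
      spanSingleton D⁰ x * G ≤ I := by
  have : Nonempty {G : Ideal D // G.FG ∧ (G : FractionalIdeal D⁰ K)⁻¹ = 1} :=
    ⟨⟨⊤, Module.Finite.fg_top, by rw [coeIdeal_top, inv_one]⟩⟩
  have hdir : Directed (· ≤ ·) fun G : {G : Ideal D // G.FG ∧ (G : FractionalIdeal D⁰ K)⁻¹ = 1} =>
      ((I / (G.1 : FractionalIdeal D⁰ K) : FractionalIdeal D⁰ K) : Submodule D K) := by
    rintro ⟨G₁, hG₁, hG₁inv⟩ ⟨G₂, hG₂, hG₂inv⟩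
    have hinv : ((G₁ * G₂ : Ideal D) : FractionalIdeal D⁰ K)⁻¹ = 1 := by
      rw [coeIdeal_mul, inv_mul_eq_inv_of_inv_eq_one hG₂inv, hG₁inv]
    have hne : ((G₁ * G₂ : Ideal D) : FractionalIdeal D⁰ K) ≠ 0 := ne_zero_of_inv_eq_one hinv
    refine ⟨⟨G₁ * G₂, hG₁.mul hG₂, hinv⟩, coe_le_coe.2 ?_, coe_le_coe.2 ?_⟩
    · exact div_le_div_of_le hne ((coeIdeal_le_coeIdeal K).2 Ideal.mul_le_left)
    · exact div_le_div_of_le hne ((coeIdeal_le_coeIdeal K).2 Ideal.mul_le_right)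
  change x ∈ ⨆ G : {G : Ideal D // G.FG ∧ (G : FractionalIdeal D⁰ K)⁻¹ = 1},
    ((I / (G.1 : FractionalIdeal D⁰ K) : FractionalIdeal D⁰ K) : Submodule D K) ↔ _
  rw [Submodule.mem_iSup_of_directed _ hdir]
  constructor
  · rintro ⟨⟨G, hG, hGinv⟩, hx⟩
    exact ⟨G, hG, hGinv, (mem_div_iff_spanSingleton_mul_le (ne_zero_of_inv_eq_one hGinv)).1 hx⟩
  · rintro ⟨G, hG, hGinv, hx⟩
    exact ⟨⟨G, hG, hGinv⟩, (mem_div_iff_spanSingleton_mul_le (ne_zero_of_inv_eq_one hGinv)).2 hx⟩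

/-- The properties of `tOp` and `wOp` (shared by every star operation of finite type) on which
the sharpness argument rests. -/
structure IsFiniteTypeStarLike (s : FractionalIdeal D⁰ K → FractionalIdeal D⁰ K) : Prop where
  le_self : ∀ X, X ≤ s X
  monotone : Monotone s
  spanSingleton_mul_le : ∀ x X, spanSingleton D⁰ x * s X ≤ s (spanSingleton D⁰ x * X)
  le_tOp : ∀ X, s X ≤ tOp X

lemma tOp_le_vOp (X : FractionalIdeal D⁰ K) : tOp X ≤ vOp X := fun _ hx => by
  obtain ⟨F, -, hFX, hxF⟩ := mem_tOp_iff.1 hx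
  exact vOp_mono hFX hxF

lemma isFiniteTypeStarLike_tOp : IsFiniteTypeStarLike (tOp (D := D) (K := K)) where
  le_self X x hx := mem_tOp_iff.2 ⟨spanSingleton D⁰ x, by simp only [coe_spanSingleton,
    Submodule.fg_span_singleton], spanSingleton_le_iff_mem.2 hx,
    le_vOp _ (mem_spanSingleton_self D⁰ x)⟩
  monotone X Y hXY x hx := by
    obtain ⟨F, hF, hFX, hxF⟩ := mem_tOp_iff.1 hx
    exact mem_tOp_iff.2 ⟨F, hF, hFX.trans hXY, hxF⟩
  spanSingleton_mul_le x X := spanSingleton_mul_le_iff.2 fun y hy => by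
    obtain ⟨F, hF, hFX, hyF⟩ := mem_tOp_iff.1 hy
    refine mem_tOp_iff.2 ⟨spanSingleton D⁰ x * F, fg_spanSingleton_mul x hF,
      mul_le_mul_right hFX _, ?_⟩
    rw [vOp_spanSingleton_mul]
    exact mem_singleton_mul.2 ⟨y, hyF, rfl⟩
  le_tOp _ := le_rfl

lemma wOp_le_tOp (X : FractionalIdeal D⁰ K) : wOp X ≤ tOp X := fun x hx => by
  obtain ⟨G, hG, hGinv, hxG⟩ := mem_wOp_iff.1 hx
  refine mem_tOp_iff.2 ⟨spanSingleton D⁰ x * G,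
    fg_spanSingleton_mul x ((coeIdeal_fg D⁰ (IsFractionRing.injective D K) G).2 hG), hxG, ?_⟩
  rw [vOp_spanSingleton_mul, vOp, hGinv, inv_one, mul_one]
  exact mem_spanSingleton_self D⁰ x

lemma isFiniteTypeStarLike_wOp : IsFiniteTypeStarLike (wOp (D := D) (K := K)) where
  le_self X x hx := mem_wOp_iff.2 ⟨⊤, Module.Finite.fg_top, by rw [coeIdeal_top, inv_one],
    by rwa [coeIdeal_top, mul_one, spanSingleton_le_iff_mem]⟩
  monotone X Y hXY x hx := by
    obtain ⟨G, hG, hGinv, hxG⟩ := mem_wOp_iff.1 hx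
    exact mem_wOp_iff.2 ⟨G, hG, hGinv, hxG.trans hXY⟩
  spanSingleton_mul_le x X := spanSingleton_mul_le_iff.2 fun y hy => by
    obtain ⟨G, hG, hGinv, hyG⟩ := mem_wOp_iff.1 hy
    refine mem_wOp_iff.2 ⟨G, hG, hGinv, ?_⟩
    rw [← spanSingleton_mul_spanSingleton, mul_assoc]
    exact mul_le_mul_right hyG _
  le_tOp := wOp_le_tOp

namespace IsFiniteTypeStarLike

variable {s : FractionalIdeal D⁰ K → FractionalIdeal D⁰ K}

lemma le_vOp (hs : IsFiniteTypeStarLike s) (X : FractionalIdeal D⁰ K) : s X ≤ vOp X :=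
  (hs.le_tOp X).trans (tOp_le_vOp X)

lemma apply_spanSingleton (hs : IsFiniteTypeStarLike s) (x : K) :
    s (spanSingleton D⁰ x) = spanSingleton D⁰ x :=
  le_antisymm (by simpa only [vOp_spanSingleton] using hs.le_vOp (spanSingleton D⁰ x))
    (hs.le_self _)

lemma le_vOp_and_one_le (hs : IsFiniteTypeStarLike s) {p : K} (hp : p ≠ 0)
    {A H J : FractionalIdeal D⁰ K} (hA : A ≠ 0) (heq : s (spanSingleton D⁰ p) = s (H * J))
    (hAH : A ≤ s H) (hJ : spanSingleton D⁰ p * A⁻¹ ≤ s J) :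
    H ≤ vOp A ∧ 1 ≤ s (H * A⁻¹) := by
  have hHJ : vOp (H * J) ≤ spanSingleton D⁰ p := by
    rw [← vOp_spanSingleton p]
    exact vOp_mono ((hs.le_self _).trans (heq.symm.trans (hs.apply_spanSingleton p)).le)
  have hAJ : J * A ≤ spanSingleton D⁰ p :=
    calc J * A ≤ J * vOp H := mul_le_mul_right (hAH.trans (hs.le_vOp H)) J
      _ ≤ vOp (H * J) := by rw [mul_comm H]; exact mul_vOp_le_vOp_mul J H
      _ ≤ _ := hHJ
  have hHpA : spanSingleton D⁰ p * (H * A⁻¹) ≤ spanSingleton D⁰ p :=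
    calc spanSingleton D⁰ p * (H * A⁻¹) = H * (spanSingleton D⁰ p * A⁻¹) := mul_left_comm _ _ _
      _ ≤ H * vOp J := mul_le_mul_right (hJ.trans (hs.le_vOp J)) H
      _ ≤ _ := (mul_vOp_le_vOp_mul H J).trans hHJ
  have hJA : spanSingleton D⁰ p⁻¹ * J ≤ A⁻¹ := by
    rw [le_inv_iff_mul_le hA, mul_assoc, spanSingleton_mul_le_iff_le_inv_mul (inv_ne_zero hp),
      inv_inv, mul_one]
    exact hAJ
  refine ⟨?_, ?_⟩
  · rw [vOp, le_inv_iff_mul_le (inv_ne_zero' hA)]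
    rw [spanSingleton_mul_le_iff_le_inv_mul hp, spanSingleton_mul_spanSingleton,
      inv_mul_cancel₀ hp, spanSingleton_one] at hHpA
    exact hHpA
  · calc 1 = spanSingleton D⁰ p⁻¹ * s (spanSingleton D⁰ p) := by
          rw [hs.apply_spanSingleton, spanSingleton_mul_spanSingleton, inv_mul_cancel₀ hp,
            spanSingleton_one]
      _ ≤ s (spanSingleton D⁰ p⁻¹ * (H * J)) := heq ▸ hs.spanSingleton_mul_le _ _
      _ = s (H * (spanSingleton D⁰ p⁻¹ * J)) := by rw [mul_left_comm]
      _ ≤ s (H * A⁻¹) := hs.monotone (mul_le_mul_right hJA H)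

end IsFiniteTypeStarLike

lemma exists_fg_le_of_mem_tOp_mul {X Y : FractionalIdeal D⁰ K} {x : K} (hx : x ∈ tOp (X * Y)) :
    ∃ Y₀ : FractionalIdeal D⁰ K, (Y₀ : Submodule D K).FG ∧ Y₀ ≤ Y ∧ x ∈ vOp (X * Y₀) := by
  obtain ⟨G, hG, hGXY, hxG⟩ := mem_tOp_iff.1 hx
  obtain ⟨X₀, Y₀, hY₀, hX₀X, hY₀Y, hGle⟩ := exists_fg_le_mul_of_fg_le_mul hG hGXY
  exact ⟨Y₀, hY₀, hY₀Y, vOp_mono (hGle.trans (mul_le_mul_left hX₀X Y₀)) hxG⟩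

theorem IsSharpOp.exists_fg_le_inv_one_mem_vOp_mul
    {s : FractionalIdeal D⁰ K → FractionalIdeal D⁰ K} (hs : IsFiniteTypeStarLike s)
    (h : IsSharpOp s) {A : Ideal D} (hA : A ≠ 0) :
    ∃ E : FractionalIdeal D⁰ K, (E : Submodule D K).FG ∧ E ≤ (A : FractionalIdeal D⁰ K)⁻¹ ∧
      (1 : K) ∈ vOp ((A : FractionalIdeal D⁰ K) * E) := by
  have hA' : (A : FractionalIdeal D⁰ K) ≠ 0 := coeIdeal_ne_zero.2 hA
  obtain ⟨a, haA, ha⟩ := Submodule.exists_mem_ne_zero_of_ne_bot hA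
  have hp : algebraMap D K a ≠ 0 := (map_ne_zero_iff _ (IsFractionRing.injective D K)).2 ha
  -- `B = (aD :_D A)`, obtained as the integral fractional ideal `a A⁻¹`
  obtain ⟨B, hB⟩ := le_one_iff_exists_coeIdeal.1 <|
    (mul_le_mul_left (spanSingleton_le_iff_mem.2 (mem_coeIdeal_of_mem D⁰ haA)) _).trans
      (self_mul_inv_le_one (A : FractionalIdeal D⁰ K))
  have hB0 : B ≠ 0 := (coeIdeal_ne_zero (K := K)).1 <| by
    rw [hB]
    exact mul_ne_zero (spanSingleton_ne_zero_iff.2 hp) (inv_ne_zero' hA')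
  have hAB : A * B ≤ Ideal.span {a} := by
    rw [← coeIdeal_le_coeIdeal K, coeIdeal_mul, hB, coeIdeal_span_singleton, mul_left_comm]
    simpa only [mul_one] using mul_le_mul_right (self_mul_inv_le_one (A : FractionalIdeal D⁰ K)) _
  have hspan : Ideal.span {a} ≠ 0 := by
    rwa [Ne, Submodule.zero_eq_bot, Ideal.span_singleton_eq_bot]
  obtain ⟨H, J, -, -, heq, hAH, hBJ⟩ := h _ A B hspan hA hB0 hAB
  rw [coeIdeal_span_singleton] at heq
  obtain ⟨hHA, h1⟩ := hs.le_vOp_and_one_le hp hA' heq hAH (hB ▸ hBJ)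
  obtain ⟨E, hE, hEA, h1E⟩ := exists_fg_le_of_mem_tOp_mul (hs.le_tOp _ (h1 (one_mem_one D⁰)))
  refine ⟨E, hE, hEA, ?_⟩
  rw [← vOp_vOp_mul]
  exact vOp_mono (mul_le_mul_left hHA E) h1E

lemma inv_eq_one_of_le_one_of_one_mem_vOp {X : FractionalIdeal D⁰ K} (hX : X ≤ 1)
    (h1 : (1 : K) ∈ vOp X) : X⁻¹ = 1 := by
  have hX0 : X ≠ 0 := by
    rintro rfl
    rw [vOp_zero, mem_zero_iff] at h1
    exact one_ne_zero h1
  refine le_antisymm ?_ ((le_inv_iff_mul_le hX0).2 (by rwa [one_mul]))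
  have := (le_inv_iff_mul_le (inv_ne_zero' hX0)).1 (spanSingleton_le_iff_mem.2 h1)
  rwa [spanSingleton_one, one_mul] at this

lemma tOp_coeIdeal_le_wOp
    (h : ∀ A : Ideal D, A ≠ 0 → A.FG → ∃ E : FractionalIdeal D⁰ K, (E : Submodule D K).FG ∧
      E ≤ (A : FractionalIdeal D⁰ K)⁻¹ ∧ (1 : K) ∈ vOp ((A : FractionalIdeal D⁰ K) * E))
    (N : Ideal D) : tOp (N : FractionalIdeal D⁰ K) ≤ wOp N := fun x hx => by
  obtain ⟨F, hF, hFN, hxF⟩ := mem_tOp_iff.1 hx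
  obtain ⟨A, rfl⟩ := le_one_iff_exists_coeIdeal.1 (hFN.trans coeIdeal_le_one)
  rcases eq_or_ne A 0 with rfl | hA
  · rw [Submodule.zero_eq_bot, coeIdeal_bot, vOp_zero, mem_zero_iff] at hxF
    rw [hxF]
    exact zero_mem _
  have hinj := IsFractionRing.injective D K
  obtain ⟨E, hE, hEA, h1⟩ := h A hA ((coeIdeal_fg D⁰ hinj A).1 hF)
  have hAE : (A : FractionalIdeal D⁰ K) * E ≤ 1 :=
    (mul_le_mul_right hEA _).trans (self_mul_inv_le_one _)
  obtain ⟨G, hG⟩ := le_one_iff_exists_coeIdeal.1 hAE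
  refine mem_wOp_iff.2 ⟨G, ?_, ?_, ?_⟩
  · rw [← coeIdeal_fg D⁰ hinj, hG, coe_mul]
    exact hF.mul hE
  · rw [hG]
    exact inv_eq_one_of_le_one_of_one_mem_vOp hAE h1
  · have hxE : spanSingleton D⁰ x * E ≤ 1 :=
      (mul_le_mul' (spanSingleton_le_iff_mem.2 hxF) hEA).trans
        (mul_comm (vOp (A : FractionalIdeal D⁰ K)) _ ▸ self_mul_inv_le_one _)
    calc spanSingleton D⁰ x * G = A * (spanSingleton D⁰ x * E) := by rw [hG, mul_left_comm]
      _ ≤ A * 1 := mul_le_mul_right hxE _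
      _ ≤ N := (mul_one (A : FractionalIdeal D⁰ K)).symm ▸ hFN

theorem IsSharpOp.tOp_coeIdeal_eq_wOp {s : FractionalIdeal D⁰ K → FractionalIdeal D⁰ K}
    (hs : IsFiniteTypeStarLike s) (h : IsSharpOp s) (N : Ideal D) :
    tOp (N : FractionalIdeal D⁰ K) = wOp N :=
  le_antisymm (tOp_coeIdeal_le_wOp (fun _ hA _ => h.exists_fg_le_inv_one_mem_vOp_mul hs hA) N)
    (wOp_le_tOp _)

end

/-- A domain `D` is `t`-sharp if and only if `D` is `w`-sharp. -/
theorem statement12 (D : Type*) [CommRing D] [IsDomain D]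
    (K : Type*) [Field K] [Algebra D K] [IsFractionRing D K] :
    IsSharpOp (D := D) (K := K) tOp ↔ IsSharpOp (D := D) (K := K) wOp :=
  ⟨fun h => h.of_eq_on_coeIdeal (h.tOp_coeIdeal_eq_wOp isFiniteTypeStarLike_tOp),
    fun h => h.of_eq_on_coeIdeal fun N => (h.tOp_coeIdeal_eq_wOp isFiniteTypeStarLike_wOp N).symm⟩
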